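/- With X_n = (1/n) I_n ⊗ X̃₁ + (1/n²) E_n ⊗ X̂₁, A_n = I_n ⊗ A, B_n = I_n ⊗ B, R_n = I_n ⊗ R, the eigenvalues of A_n − n B_n R_n⁻¹ B_n' X_n are the eigenvalues of A − B R⁻¹ B' X̃₁ (with multiplicity n−1) together with the eigenvalues of A − B R⁻¹ B'(X̃₁ + X̂₁). In particular, if A − B R⁻¹ B' X̃₁ and A − B R⁻¹ B'(X̃₁ + X̂₁) are both Hurwitz, then A_n − n B_n R_n⁻¹ B_n' X_n is Hurwitz. -/

import Mathlib

/-!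
Write `K = B R⁻¹ Bᵀ`, `F = A - K X̃₁` and `G = K X̂₁`. The closed-loop matrix is
`I ⊗ F - (E/n) ⊗ G`. The rank-one projection `E/n` is similar to `diag(1, 0, …, 0)`, and
conjugating the first Kronecker factor accordingly turns the matrix into a block diagonal one with
blocks `F - G, F, …, F`. So its characteristic polynomial is `χ_F ^ (n - 1) * χ_(F - G)`, and its
eigenvalues are those of `F` and of `F - G`.
-/

open Matrix Polynomial
open scoped Kronecker

/-- The n×n matrix of ones. -/
def onesMatrix (n : ℕ) : Matrix (Fin n) (Fin n) ℝ := Matrix.of fun _ _ => 1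

/-- A real matrix is Hurwitz if all its (complex) eigenvalues have negative real part. -/
def Hurwitz {ι : Type*} [Fintype ι] [DecidableEq ι] (M : Matrix ι ι ℝ) : Prop :=
  ∀ μ ∈ spectrum ℂ (M.map (algebraMap ℝ ℂ)), μ.re < 0

theorem Matrix.kronecker_sub {α l m n p : Type*} [NonUnitalNonAssocRing α] (A : Matrix l m α)
    (B C : Matrix n p α) : A ⊗ₖ (B - C) = A ⊗ₖ B - A ⊗ₖ C := by
  ext; simp [mul_sub]

section
variable {R : Type*} [CommRing R] {m n : Type*} [Fintype m] [DecidableEq m] [Fintype n]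
  [DecidableEq n]

theorem charmatrix_blockDiagonal (f : m → Matrix n n R) :
    charmatrix (blockDiagonal f) = blockDiagonal fun i => charmatrix (f i) := by
  ext ⟨a, i⟩ ⟨b, j⟩
  rcases eq_or_ne i j with rfl | hij
  · rcases eq_or_ne a b with rfl | hab <;> simp [*]
  · simp [blockDiagonal_apply_ne _ _ _ hij, hij]

theorem charpoly_blockDiagonal (f : m → Matrix n n R) :
    (blockDiagonal f).charpoly = ∏ i, (f i).charpoly := by
  rw [charpoly, charmatrix_blockDiagonal, det_blockDiagonal]; rfl

theorem charpoly_conj_of_mul_eq_one {S T : Matrix n n R} (h : S * T = 1) (N : Matrix n n R) :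
    (S * N * T).charpoly = N.charpoly := by
  rw [charpoly_mul_comm, ← Matrix.mul_assoc, mul_eq_one_comm.mp h, Matrix.one_mul]

theorem charpoly_one_kronecker_sub_diagonal_kronecker (c : m → R) (F G : Matrix n n R) :
    ((1 : Matrix m m R) ⊗ₖ F - diagonal c ⊗ₖ G).charpoly = ∏ i, (F - c i • G).charpoly := by
  have hblock : (1 : Matrix m m R) ⊗ₖ F - diagonal c ⊗ₖ G
      = reindex (Equiv.prodComm _ _) (Equiv.prodComm _ _) (blockDiagonal fun i => F - c i • G) := by
    rw [← diagonal_one, diagonal_kronecker, diagonal_kronecker]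
    ext ⟨a, i⟩ ⟨b, j⟩
    simp only [reindex_apply, submatrix_apply, Matrix.sub_apply, blockDiagonal_apply,
      Equiv.prodComm_symm, Equiv.prodComm_apply, Prod.swap_prod_mk]
    split_ifs <;> simp
  rw [hblock, charpoly_reindex, charpoly_blockDiagonal]

theorem charpoly_one_kronecker_sub_conj_kronecker {S T : Matrix m m R} (h : S * T = 1)
    (J : Matrix m m R) (F G : Matrix n n R) :
    ((1 : Matrix m m R) ⊗ₖ F - (S * J * T) ⊗ₖ G).charpoly
      = ((1 : Matrix m m R) ⊗ₖ F - J ⊗ₖ G).charpoly := by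
  have hkron : (S ⊗ₖ (1 : Matrix n n R)) * (T ⊗ₖ 1) = 1 := by
    rw [← mul_kronecker_mul, h, Matrix.one_mul, one_kronecker_one]
  have hconj : (1 : Matrix m m R) ⊗ₖ F - (S * J * T) ⊗ₖ G
      = (S ⊗ₖ (1 : Matrix n n R)) * ((1 : Matrix m m R) ⊗ₖ F - J ⊗ₖ G) * (T ⊗ₖ 1) := by
    rw [Matrix.mul_sub, Matrix.sub_mul, ← mul_kronecker_mul, ← mul_kronecker_mul,
      ← mul_kronecker_mul, ← mul_kronecker_mul, Matrix.mul_one, h]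
    simp
  rw [hconj, charpoly_conj_of_mul_eq_one hkron]

end

theorem exists_conj_vecMulVec_one_one {K ι : Type*} [Field K] [Fintype ι] [DecidableEq ι] (z : ι)
    (h : (Fintype.card ι : K) ≠ 0) :
    ∃ S T : Matrix ι ι K, S * T = 1 ∧
      (Fintype.card ι : K)⁻¹ • vecMulVec 1 1 = S * diagonal (Pi.single z 1) * T := by
  rw [diagonal_single, single_eq_single_vecMulVec_single]
  set e : ι → K := Pi.single z 1
  set u : ι → K := 1
  have hee : e ⬝ᵥ e = 1 := by simp [e]
  have heu : e ⬝ᵥ u = 1 := by simp [e, u]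
  have hue : u ⬝ᵥ e = 1 := by simp [e, u]
  have huu : u ⬝ᵥ u = Fintype.card ι := by simp [u]
  -- `S` maps `e` to `u` and `Pi.single j 1` to `Pi.single j 1 - e` for `j ≠ z`: a basis adapted
  -- to the projection `vecMulVec u u / card ι`. `T` is its inverse.
  refine ⟨1 - vecMulVec e u + vecMulVec u e,
    1 - vecMulVec e e + (Fintype.card ι : K)⁻¹ • (2 • vecMulVec e u - vecMulVec u u), ?_, ?_⟩ <;>
  simp only [Matrix.add_mul, Matrix.sub_mul, Matrix.mul_add, Matrix.mul_sub, Matrix.one_mul,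
    Matrix.mul_one, Matrix.mul_smul, Matrix.smul_mul, vecMulVec_mul_vecMulVec, hee, heu, hue, huu,
    vecMulVec_smul, smul_sub] <;>
  match_scalars <;> field_simp <;> ring

theorem one_kronecker_sub_feedback_mul {K m d k : Type*} [Field K] [Fintype m] [DecidableEq m]
    [Fintype d] [DecidableEq d] [Fintype k] [DecidableEq k] {c : K} (hc : c ≠ 0) (J : Matrix m m K)
    (A X Y : Matrix d d K) (B : Matrix d k K) (R : Matrix k k K) :
    (1 : Matrix m m K) ⊗ₖ A - (c • (((1 : Matrix m m K) ⊗ₖ B) * ((1 : Matrix m m K) ⊗ₖ R)⁻¹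
        * ((1 : Matrix m m K) ⊗ₖ B)ᵀ)) * (c⁻¹ • ((1 : Matrix m m K) ⊗ₖ X) + (c ^ 2)⁻¹ • (J ⊗ₖ Y))
      = (1 : Matrix m m K) ⊗ₖ (A - B * R⁻¹ * Bᵀ * X) - (c⁻¹ • J) ⊗ₖ (B * R⁻¹ * Bᵀ * Y) := by
  have hgain : ((1 : Matrix m m K) ⊗ₖ B) * ((1 : Matrix m m K) ⊗ₖ R)⁻¹ * ((1 : Matrix m m K) ⊗ₖ B)ᵀ
      = (1 : Matrix m m K) ⊗ₖ (B * R⁻¹ * Bᵀ) := by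
    rw [inv_kronecker, inv_one, ← kroneckerMap_transpose, transpose_one, ← mul_kronecker_mul,
      ← mul_kronecker_mul, Matrix.one_mul, Matrix.one_mul]
  rw [hgain, Matrix.mul_add, smul_mul_smul_comm, smul_mul_smul_comm, ← mul_kronecker_mul,
    ← mul_kronecker_mul, mul_inv_cancel₀ hc, one_smul, Matrix.one_mul, Matrix.one_mul, sq, mul_inv,
    ← mul_assoc, mul_inv_cancel₀ hc, one_mul, ← smul_kronecker, kronecker_sub,
    sub_add_eq_sub_sub]

theorem Hurwitz.of_charpoly_eq_pow_mul {ι κ : Type*} [Fintype ι] [DecidableEq ι] [Fintype κ]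
    [DecidableEq κ] {M : Matrix ι ι ℝ} {F G : Matrix κ κ ℝ} {r : ℕ}
    (h : M.charpoly = F.charpoly ^ r * G.charpoly) (hF : Hurwitz F) (hG : Hurwitz G) :
    Hurwitz M := by
  intro μ hμ
  rw [mem_spectrum_iff_isRoot_charpoly, charpoly_map, h, Polynomial.map_mul, Polynomial.map_pow,
    IsRoot, eval_mul, eval_pow, mul_eq_zero] at hμ
  rcases hμ with hFμ | hGμ
  · refine hF μ ?_
    rw [mem_spectrum_iff_isRoot_charpoly, charpoly_map]
    exact (pow_eq_zero_iff'.mp hFμ).1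
  · refine hG μ ?_
    rw [mem_spectrum_iff_isRoot_charpoly, charpoly_map]
    exact hGμ

theorem onesMatrix_eq_vecMulVec (n : ℕ) : onesMatrix n = vecMulVec 1 1 := by
  ext; simp [onesMatrix, vecMulVec_apply]

theorem charpoly_feedback_matrix {n : ℕ} (hn : 1 ≤ n) {d k : ℕ}
    (A X₁tilde X₁hat : Matrix (Fin d) (Fin d) ℝ) (B : Matrix (Fin d) (Fin k) ℝ)
    (R : Matrix (Fin k) (Fin k) ℝ) :
    ((1 : Matrix (Fin n) (Fin n) ℝ) ⊗ₖ A
        - ((n : ℝ) • (((1 : Matrix (Fin n) (Fin n) ℝ) ⊗ₖ B)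
            * ((1 : Matrix (Fin n) (Fin n) ℝ) ⊗ₖ R)⁻¹
            * ((1 : Matrix (Fin n) (Fin n) ℝ) ⊗ₖ B)ᵀ))
          * ((n : ℝ)⁻¹ • ((1 : Matrix (Fin n) (Fin n) ℝ) ⊗ₖ X₁tilde)
            + ((n : ℝ)^2)⁻¹ • (onesMatrix n ⊗ₖ X₁hat))).charpoly
      = (A - B * R⁻¹ * Bᵀ * X₁tilde).charpoly ^ (n - 1)
        * (A - B * R⁻¹ * Bᵀ * (X₁tilde + X₁hat)).charpoly := by
  obtain ⟨m, rfl⟩ : ∃ m, n = m + 1 := ⟨n - 1, by omega⟩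
  obtain ⟨S, T, hST, hones⟩ :=
    exists_conj_vecMulVec_one_one (K := ℝ) (0 : Fin (m + 1)) (by positivity)
  rw [Fintype.card_fin] at hones
  rw [one_kronecker_sub_feedback_mul (by positivity), onesMatrix_eq_vecMulVec, hones,
    charpoly_one_kronecker_sub_conj_kronecker hST, charpoly_one_kronecker_sub_diagonal_kronecker,
    Fin.prod_univ_succ]
  simp [Matrix.mul_add, sub_sub, mul_comm]

theorem feedback_matrix_hurwitz_general (n d k : ℕ) (hn : 1 ≤ n)
    (A X₁tilde X₁hat : Matrix (Fin d) (Fin d) ℝ) (B : Matrix (Fin d) (Fin k) ℝ)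
    (R : Matrix (Fin k) (Fin k) ℝ) :
    ((1 : Matrix (Fin n) (Fin n) ℝ) ⊗ₖ A
        - ((n : ℝ) • (((1 : Matrix (Fin n) (Fin n) ℝ) ⊗ₖ B)
            * ((1 : Matrix (Fin n) (Fin n) ℝ) ⊗ₖ R)⁻¹
            * ((1 : Matrix (Fin n) (Fin n) ℝ) ⊗ₖ B)ᵀ))
          * ((n : ℝ)⁻¹ • ((1 : Matrix (Fin n) (Fin n) ℝ) ⊗ₖ X₁tilde)
            + ((n : ℝ)^2)⁻¹ • (onesMatrix n ⊗ₖ X₁hat))).charpoly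
      = (A - B * R⁻¹ * Bᵀ * X₁tilde).charpoly ^ (n - 1)
        * (A - B * R⁻¹ * Bᵀ * (X₁tilde + X₁hat)).charpoly ∧
    (Hurwitz (A - B * R⁻¹ * Bᵀ * X₁tilde) → Hurwitz (A - B * R⁻¹ * Bᵀ * (X₁tilde + X₁hat)) →
      Hurwitz ((1 : Matrix (Fin n) (Fin n) ℝ) ⊗ₖ A
        - ((n : ℝ) • (((1 : Matrix (Fin n) (Fin n) ℝ) ⊗ₖ B)
            * ((1 : Matrix (Fin n) (Fin n) ℝ) ⊗ₖ R)⁻¹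
            * ((1 : Matrix (Fin n) (Fin n) ℝ) ⊗ₖ B)ᵀ))
          * ((n : ℝ)⁻¹ • ((1 : Matrix (Fin n) (Fin n) ℝ) ⊗ₖ X₁tilde)
            + ((n : ℝ)^2)⁻¹ • (onesMatrix n ⊗ₖ X₁hat)))) := by
  have hcharpoly := charpoly_feedback_matrix hn A X₁tilde X₁hat B R
  exact ⟨hcharpoly, Hurwitz.of_charpoly_eq_pow_mul hcharpoly⟩

/-- The eigenvalues of A_n - n B_n R_n⁻¹ B_n' X_n are the eigenvalues of A - B R⁻¹ B' X̃₁ (with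
multiplicity n-1) together with those of A - B R⁻¹ B'(X̃₁+X̂₁); in particular if the latter two
matrices are Hurwitz, so is the former. -/
theorem feedback_matrix_hurwitz (n d k : ℕ) (hn : 1 ≤ n)
    (A X₁tilde X₁hat : Matrix (Fin d) (Fin d) ℝ) (B : Matrix (Fin d) (Fin k) ℝ)
    (R : Matrix (Fin k) (Fin k) ℝ) (hR : IsUnit R.det)
    (hdiag₁ : ∃ P : Matrix (Fin d) (Fin d) ℂ, IsUnit P.det ∧
      (P⁻¹ * (A - B * R⁻¹ * Bᵀ * X₁tilde).map (algebraMap ℝ ℂ) * P).IsDiag)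
    (hdiag₂ : ∃ P : Matrix (Fin d) (Fin d) ℂ, IsUnit P.det ∧
      (P⁻¹ * (A - B * R⁻¹ * Bᵀ * (X₁tilde + X₁hat)).map (algebraMap ℝ ℂ) * P).IsDiag) :
    ((1 : Matrix (Fin n) (Fin n) ℝ) ⊗ₖ A
        - ((n : ℝ) • (((1 : Matrix (Fin n) (Fin n) ℝ) ⊗ₖ B)
            * ((1 : Matrix (Fin n) (Fin n) ℝ) ⊗ₖ R)⁻¹
            * ((1 : Matrix (Fin n) (Fin n) ℝ) ⊗ₖ B)ᵀ))
          * ((n : ℝ)⁻¹ • ((1 : Matrix (Fin n) (Fin n) ℝ) ⊗ₖ X₁tilde)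
            + ((n : ℝ)^2)⁻¹ • (onesMatrix n ⊗ₖ X₁hat))).charpoly
      = (A - B * R⁻¹ * Bᵀ * X₁tilde).charpoly ^ (n - 1)
        * (A - B * R⁻¹ * Bᵀ * (X₁tilde + X₁hat)).charpoly ∧
    (Hurwitz (A - B * R⁻¹ * Bᵀ * X₁tilde) → Hurwitz (A - B * R⁻¹ * Bᵀ * (X₁tilde + X₁hat)) →
      Hurwitz ((1 : Matrix (Fin n) (Fin n) ℝ) ⊗ₖ A
        - ((n : ℝ) • (((1 : Matrix (Fin n) (Fin n) ℝ) ⊗ₖ B)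
            * ((1 : Matrix (Fin n) (Fin n) ℝ) ⊗ₖ R)⁻¹
            * ((1 : Matrix (Fin n) (Fin n) ℝ) ⊗ₖ B)ᵀ))
          * ((n : ℝ)⁻¹ • ((1 : Matrix (Fin n) (Fin n) ℝ) ⊗ₖ X₁tilde)
            + ((n : ℝ)^2)⁻¹ • (onesMatrix n ⊗ₖ X₁hat)))) :=
  feedback_matrix_hurwitz_general n d k hn A X₁tilde X₁hat B R
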